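/- arXiv:0909.3901 — 7 statements merged into one kernel-verified Lean document; each statement's English description precedes it below -/
import Mathlib

section
/- For any real number x, any positive integer l, and any l×l real matrix A, the sum of det(xI + ĪA) over all diagonal sign matrices Ī with an even number of −1 entries equals 2^{l−1}(x^l + det A). -/
/-!
Write `D_s` for the sign matrix of `s`. Row `i` of `D_s M + N` is affine in the sign `s i`, so
summing `det (D_s M + N)` over all `2^l` sign patterns, one row at a time, replaces every row by
twice the corresponding row of `N`: the sum is `2^l det N`. With `M = A`, `N = x I` this gives
`∑ det (x I + D_s A) = 2^l x^l`; since `det D_s * det (x I + D_s A) = det (D_s (x I) + A)`, it also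
gives `∑ (-1)^{#s} det (x I + D_s A) = 2^l det A`. Half the sum of these two is the sum over the
even patterns.
-/

open Finset Matrix

/-- A diagonal sign matrix determined by a choice `s : Fin l → Bool`
(`true` means diagonal entry `-1`). -/
def signMatrix (l : ℕ) (s : Fin l → Bool) : Matrix (Fin l) (Fin l) ℝ :=
  Matrix.diagonal (fun i => if s i then (-1 : ℝ) else 1)

variable {n R : Type*} [Fintype n] [DecidableEq n] [CommRing R]

def signDiag (s : n → Bool) : Matrix n n R :=
  diagonal fun i => if s i then -1 else 1

theorem signDiag_mul_self (s : n → Bool) : (signDiag s : Matrix n n R) * signDiag s = 1 := by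
  rw [signDiag, diagonal_mul_diagonal, ← diagonal_one]
  congr 1
  ext i
  split_ifs <;> simp

theorem det_signDiag (s : n → Bool) : (signDiag s : Matrix n n R).det = (-1) ^ #{i | s i} := by
  rw [signDiag, det_diagonal, prod_ite, prod_const, prod_const_one, mul_one]

theorem sum_det_signDiag_mul_add (M N : Matrix n n R) :
    ∑ s : n → Bool, (signDiag s * M + N).det = 2 ^ Fintype.card n * N.det := by
  set row : n → Bool → n → R := fun i b => (if b then -1 else 1 : R) • M i + N i
  have hrow (s : n → Bool) : (signDiag s * M + N : Matrix n n R) = fun i => row i (s i) := by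
    ext i j
    rw [Matrix.add_apply, signDiag, diagonal_mul]
    rfl
  have hsum : (fun i => ∑ b, row i b) = fun i => (2 : R) • N i := by
    funext i
    rw [Fintype.sum_bool, two_smul]
    simp only [row, if_true, Bool.false_eq_true, if_false, neg_one_smul, one_smul]
    abel
  calc ∑ s : n → Bool, (signDiag s * M + N).det
      = ∑ s : n → Bool, detRowAlternating.toMultilinearMap fun i => row i (s i) :=
        sum_congr rfl fun s _ => by rw [hrow]; rfl
    _ = 2 ^ Fintype.card n * N.det := by
      rw [← MultilinearMap.map_sum, hsum]
      exact det_smul N 2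

theorem sum_det_smul_one_add_signDiag_mul (x : R) (A : Matrix n n R) :
    ∑ s : n → Bool, (x • (1 : Matrix n n R) + signDiag s * A).det
      = 2 ^ Fintype.card n * x ^ Fintype.card n := by
  simp_rw [add_comm (x • _), sum_det_signDiag_mul_add, det_smul, det_one, mul_one]

theorem sum_neg_one_pow_mul_det_smul_one_add_signDiag_mul (x : R) (A : Matrix n n R) :
    ∑ s : n → Bool, (-1) ^ #{i | s i} * (x • (1 : Matrix n n R) + signDiag s * A).det
      = 2 ^ Fintype.card n * A.det := by
  have h (s : n → Bool) : (-1) ^ #{i | s i} * (x • (1 : Matrix n n R) + signDiag s * A).det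
      = (signDiag s * (x • 1) + A).det := by
    rw [← det_signDiag, ← det_mul, mul_add, ← mul_assoc, signDiag_mul_self, one_mul, mul_smul_comm]
  simp_rw [h, sum_det_signDiag_mul_add]

theorem Finset.two_mul_sum_filter_even {α : Type*} (t : Finset α) (c : α → ℕ) (f : α → R) :
    2 * ∑ a ∈ t with Even (c a), f a = ∑ a ∈ t, f a + ∑ a ∈ t, (-1) ^ c a * f a := by
  rw [sum_filter, mul_sum, ← sum_add_distrib]
  refine sum_congr rfl fun a _ => ?_
  rcases Nat.even_or_odd (c a) with h | h
  · rw [if_pos h, h.neg_one_pow]; ring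
  · rw [if_neg (Nat.not_even_iff_odd.mpr h), h.neg_one_pow]; ring

/-- The sum of `det (x I + Ī A)` over all diagonal sign matrices `Ī`
with an even number of `-1` diagonal entries equals `2^(l-1) (x^l + det A)`. -/
theorem sum_det_even_sign_matrices (l : ℕ) (hl : 1 ≤ l) (x : ℝ)
    (A : Matrix (Fin l) (Fin l) ℝ) :
    ∑ s ∈ Finset.univ.filter
        (fun s : Fin l → Bool => Even ((Finset.univ.filter (fun i => s i = true)).card)),
      (x • (1 : Matrix (Fin l) (Fin l) ℝ) + signMatrix l s * A).det
      = 2 ^ (l - 1) * (x ^ l + A.det) := by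
  have h2 : (2 : ℝ) * ∑ s : Fin l → Bool with Even #{i | s i}, (x • 1 + signDiag s * A).det
      = 2 * (2 ^ (l - 1) * (x ^ l + A.det)) := by
    rw [two_mul_sum_filter_even, sum_det_smul_one_add_signDiag_mul,
      sum_neg_one_pow_mul_det_smul_one_add_signDiag_mul, Fintype.card_fin, ← mul_add, ← mul_assoc,
      ← pow_succ', Nat.sub_add_cancel hl]
  exact mul_left_cancel₀ two_ne_zero h2
end

section
/- For any real number x, any positive integer l, and any l×l real matrix A, the sum of det(xI + ĪA) over all diagonal sign matrices Ī with an odd number of −1 entries equals 2^{l−1}(x^l − det A). -/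
/-!
Expanding the determinant row by row, the rows of `x I + Ī A` are `x eᵢ ± Aᵢ`, so by
multilinearity the sum over all `2^l` sign matrices is `det (2x I) = (2x)^l`, while the sum
weighted by `det Ī` is the sum of `det (x Ī + A)`, whose rows `± x eᵢ + Aᵢ` add up to `2 Aᵢ`,
giving `2^l det A`. The odd sign matrices are exactly those with `det Ī = -1`, so twice their
sum is the difference `(2x)^l - 2^l det A` of the two.
-/

open Finset Matrix

variable {n R : Type*} [Fintype n] [DecidableEq n] [CommRing R]

theorem two_mul_sum_filter_odd {α : Type*} [Fintype α] (k : α → ℕ) (f : α → R) :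
    2 * ∑ a ∈ univ.filter (fun a => Odd (k a)), f a
      = ∑ a, f a - ∑ a, (-1) ^ k a * f a := by
  rw [← sum_sub_distrib, mul_sum, sum_filter]
  refine sum_congr rfl fun a _ => ?_
  rcases Nat.even_or_odd (k a) with hk | hk
  · simp [hk.neg_one_pow, Nat.not_odd_iff_even.mpr hk]
  · simp only [hk, ↓reduceIte, hk.neg_one_pow, neg_mul, one_mul, sub_neg_eq_add, two_mul]

namespace Matrix

theorem sum_det_of_row_choices {β : Type*} [Fintype β] (g : n → β → n → R) :
    ∑ s : n → β, det (of fun i => g i (s i)) = det (of fun i => ∑ b, g i b) :=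
  (detRowAlternating.toMultilinearMap.map_sum g).symm

def signDiag (s : n → Bool) : Matrix n n R :=
  diagonal fun i => if s i then -1 else 1

theorem signDiag_mul_self (s : n → Bool) : signDiag s * signDiag s = (1 : Matrix n n R) := by
  rw [signDiag, diagonal_mul_diagonal, ← diagonal_one]
  congr 1
  ext i
  split_ifs <;> simp

theorem det_signDiag (s : n → Bool) :
    det (signDiag s : Matrix n n R) = (-1) ^ (univ.filter fun i => s i = true).card := by
  simp [signDiag, det_diagonal, prod_ite]

theorem sum_det_signDiag_mul_add (B C : Matrix n n R) :
    ∑ s : n → Bool, det (signDiag s * B + C) = 2 ^ Fintype.card n * det C := by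
  let g : n → Bool → n → R := fun i b => (if b then -1 else 1 : R) • B i + C i
  have rows (s : n → Bool) : signDiag s * B + C = of fun i => g i (s i) := by
    ext i j
    by_cases hs : s i <;> simp [g, signDiag, diagonal_mul, hs]
  have row_sum : (of fun i => ∑ b, g i b) = (2 : R) • C := by
    ext i j
    simp [g, two_mul, add_add_add_comm]
  simp only [rows, sum_det_of_row_choices, row_sum, det_smul]

theorem two_mul_sum_det_odd_signDiag (x : R) (A : Matrix n n R) :
    2 * ∑ s ∈ univ.filter (fun s : n → Bool => Odd (univ.filter fun i => s i = true).card),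
        det (x • (1 : Matrix n n R) + signDiag s * A)
      = 2 ^ Fintype.card n * (x ^ Fintype.card n - det A) := by
  have total : ∑ s : n → Bool, det (x • (1 : Matrix n n R) + signDiag s * A)
      = 2 ^ Fintype.card n * x ^ Fintype.card n := by
    simp only [add_comm (x • (1 : Matrix n n R)), sum_det_signDiag_mul_add, det_smul, det_one,
      mul_one]
  -- Multiplying by `det Ī` moves the sign from `A` onto `x I`, since `Ī * Ī = 1`.
  have signed : ∑ s : n → Bool, (-1) ^ (univ.filter fun i => s i = true).card *
      det (x • (1 : Matrix n n R) + signDiag s * A) = 2 ^ Fintype.card n * det A := by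
    simp only [← det_signDiag, ← det_mul, mul_add, ← mul_assoc, signDiag_mul_self, one_mul,
      sum_det_signDiag_mul_add]
  rw [two_mul_sum_filter_odd, total, signed, mul_sub]

end Matrix

theorem sum_det_odd_sign_matrices_general (l : ℕ) (x : ℝ)
    (A : Matrix (Fin l) (Fin l) ℝ) :
    ∑ s ∈ Finset.univ.filter
        (fun s : Fin l → Bool => Odd ((Finset.univ.filter (fun i => s i = true)).card)),
      (x • (1 : Matrix (Fin l) (Fin l) ℝ) + signMatrix l s * A).det
      = 2 ^ (l - 1) * (x ^ l - A.det) := by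
  have h := two_mul_sum_det_odd_signDiag x A
  rw [Fintype.card_fin] at h
  cases l with
  | zero => simp_all [det_isEmpty]
  | succ k =>
    rw [pow_succ', mul_assoc] at h
    exact mul_left_cancel₀ two_ne_zero h

/-- The sum of `det (x I + Ī A)` over all diagonal sign matrices `Ī`
with an odd number of `-1` diagonal entries equals `2^(l-1) (x^l - det A)`. -/
theorem sum_det_odd_sign_matrices (l : ℕ) (hl : 1 ≤ l) (x : ℝ)
    (A : Matrix (Fin l) (Fin l) ℝ) :
    ∑ s ∈ Finset.univ.filter
        (fun s : Fin l → Bool => Odd ((Finset.univ.filter (fun i => s i = true)).card)),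
      (x • (1 : Matrix (Fin l) (Fin l) ℝ) + signMatrix l s * A).det
      = 2 ^ (l - 1) * (x ^ l - A.det) :=
  sum_det_odd_sign_matrices_general l x A
end

section
/- Let A be an l×l real matrix such that det(I + ĪA) ≥ 0 for every l×l diagonal matrix Ī whose diagonal entries are ±1. Then |det A| ≤ 1. -/
open Finset Matrix

/-!
`s ↦ det (I + Ī_s A)` is multi-affine in the signs, since the sign `Ī_s i` only enters row `i`.
By multilinearity of the determinant in the rows, averaging over all `s` leaves `det I = 1`,
while averaging against `∏ᵢ Ī_s i` leaves `det A`. As every `det (I + Ī_s A)` is nonnegative,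
the triangle inequality bounds the second average by the first.
-/

namespace MultilinearMap

variable {R ι M N : Type*} [CommRing R] [AddCommMonoid M] [Module R M] [AddCommMonoid N]
  [Module R N] [Fintype ι] [DecidableEq ι] (f : MultilinearMap R (fun _ : ι => M) N)

theorem sum_map_add_sign_smul (u v : ι → M) :
    ∑ s : ι → Bool, f (fun i => u i + (if s i then (-1 : R) else 1) • v i)
      = (2 : R) ^ Fintype.card ι • f u := by
  rw [← f.map_sum (fun i (b : Bool) => u i + (if b then (-1 : R) else 1) • v i),
    ← Finset.card_univ, ← Finset.prod_const, ← f.map_smul_univ]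
  congr 1
  funext i
  simp only [Fintype.sum_bool, if_true, Bool.false_eq_true, if_false]
  module

theorem sum_prod_sign_smul_map_add_sign_smul (u v : ι → M) :
    ∑ s : ι → Bool, (∏ i, if s i then (-1 : R) else 1) •
        f (fun i => u i + (if s i then (-1 : R) else 1) • v i)
      = (2 : R) ^ Fintype.card ι • f v := by
  simp_rw [← f.map_smul_univ]
  rw [← f.map_sum fun i (b : Bool) =>
      (if b then (-1 : R) else 1) • (u i + (if b then (-1 : R) else 1) • v i),
    ← Finset.card_univ, ← Finset.prod_const, ← f.map_smul_univ]
  congr 1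
  funext i
  simp only [Fintype.sum_bool, if_true, Bool.false_eq_true, if_false]
  module

end MultilinearMap

namespace Matrix

variable {R n : Type*} [CommRing R] [Fintype n] [DecidableEq n]

theorem det_one_add_diagonal_mul (d : n → R) (A : Matrix n n R) :
    (1 + diagonal d * A).det = detRowAlternating (fun i => (1 : Matrix n n R) i + d i • A i) := by
  congr 1
  ext i j
  simp [diagonal_mul]

theorem sum_det_one_add_diagonal_sign_mul (A : Matrix n n R) :
    ∑ s : n → Bool, (1 + diagonal (fun i => if s i then (-1 : R) else 1) * A).det
      = 2 ^ Fintype.card n := by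
  simp_rw [det_one_add_diagonal_mul]
  exact (detRowAlternating.toMultilinearMap.sum_map_add_sign_smul _ _).trans
    ((congrArg (_ • ·) (det_one (n := n) (R := R))).trans (mul_one _))

theorem sum_prod_sign_mul_det_one_add_diagonal_sign_mul (A : Matrix n n R) :
    ∑ s : n → Bool, (∏ i, if s i then (-1 : R) else 1) *
        (1 + diagonal (fun i => if s i then (-1 : R) else 1) * A).det
      = 2 ^ Fintype.card n * A.det := by
  simp_rw [det_one_add_diagonal_mul]
  exact detRowAlternating.toMultilinearMap.sum_prod_sign_smul_map_add_sign_smul _ _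

end Matrix

theorem abs_det_le_one_of_sign_dets_nonneg_general (l : ℕ)
    (A : Matrix (Fin l) (Fin l) ℝ)
    (h : ∀ s : Fin l → Bool,
      0 ≤ ((1 : Matrix (Fin l) (Fin l) ℝ) +
        Matrix.diagonal (fun i => if s i then (-1 : ℝ) else 1) * A).det) :
    |A.det| ≤ 1 := by
  have hsign : ∀ s : Fin l → Bool, |∏ i, if s i then (-1 : ℝ) else 1| = 1 := fun s => by
    rw [Finset.abs_prod]
    exact Finset.prod_eq_one fun i _ => by cases s i <;> simp
  have hpow : (0 : ℝ) < 2 ^ l := by positivity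
  have hscaled : 2 ^ l * |A.det| ≤ 2 ^ l * 1 := by
    calc 2 ^ l * |A.det| = |∑ s : Fin l → Bool, (∏ i, if s i then (-1 : ℝ) else 1) *
          (1 + diagonal (fun i => if s i then (-1 : ℝ) else 1) * A).det| := by
          rw [sum_prod_sign_mul_det_one_add_diagonal_sign_mul, abs_mul, Fintype.card_fin,
            abs_of_pos hpow]
      _ ≤ ∑ s : Fin l → Bool,
            (1 + diagonal (fun i => if s i then (-1 : ℝ) else 1) * A).det := by
          refine (Finset.abs_sum_le_sum_abs _ _).trans (Finset.sum_le_sum fun s _ => ?_)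
          rw [abs_mul, hsign, one_mul, abs_of_nonneg (h s)]
      _ = 2 ^ l * 1 := by rw [sum_det_one_add_diagonal_sign_mul, Fintype.card_fin, mul_one]
  exact le_of_mul_le_mul_left hscaled hpow

/-- If `det (I + Ī A) ≥ 0` for every diagonal sign matrix `Ī`
(diagonal entries `±1`), then `|det A| ≤ 1`. -/
theorem abs_det_le_one_of_sign_dets_nonneg (l : ℕ) (hl : 1 ≤ l)
    (A : Matrix (Fin l) (Fin l) ℝ)
    (h : ∀ s : Fin l → Bool,
      0 ≤ ((1 : Matrix (Fin l) (Fin l) ℝ) +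
        Matrix.diagonal (fun i => if s i then (-1 : ℝ) else 1) * A).det) :
    |A.det| ≤ 1 :=
  abs_det_le_one_of_sign_dets_nonneg_general l A h
end

section
/- Let m > l ≥ 1 be integers and Q = (q_{ij}) an m×l real matrix satisfying, for each column j = 1,…,l, the condition q_{jj} > ∑_{i ≠ j} |q_{ij}| (the sum over all rows i ≠ j). Then the determinant of the l×l submatrix S₁ formed by the first l rows of Q is nonnegative and has the largest absolute value among determinants of all l×l submatrices of Q: det S₁ = max_S |det S|, where S ranges over all l×l submatrices of Q obtained by selecting l rows. -/
/-!
Induction on `l` by one step of Gaussian elimination with the pivot `q₁₁ > 0`. Subtracting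
multiples of the first column from the others clears the first row and changes no maximal minor,
and the Schur complement of `q₁₁` is again column diagonally dominant: the correction to
column `j` costs `(|q₁ⱼ| / q₁₁) ∑_{i>1} |q_{i1}| ≤ |q₁ⱼ|`, which column `j` had to spare.
A selection of rows containing row `1` then has determinant `q₁₁` times a minor of the Schur
complement, while for one avoiding row `1`, expansion along the first column bounds the
determinant by `(∑_{i>1} |q_{i1}|) · max minor ≤ q₁₁ · max minor`.
-/

open Finset Matrix

theorem Fin.sum_erase_succ {M : Type*} [AddCommGroup M] {n : ℕ} (f : Fin (n + 1) → M)
    (p : Fin n) : ∑ i ∈ univ.erase p.succ, f i = f 0 + ∑ i ∈ univ.erase p, f i.succ := by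
  rw [sum_erase_eq_sub (mem_univ _), sum_erase_eq_sub (mem_univ _), Fin.sum_univ_succ]
  abel

theorem Fin.sum_erase_zero {M : Type*} [AddCommGroup M] {n : ℕ} (f : Fin (n + 1) → M) :
    ∑ i ∈ univ.erase 0, f i = ∑ i : Fin n, f i.succ := by
  rw [sum_erase_eq_sub (mem_univ _), Fin.sum_univ_succ]
  abel

theorem StrictMono.exists_eq_succ_comp {k n : ℕ} {ρ : Fin k → Fin (n + 1)}
    (hρ : StrictMono ρ) (h0 : ∀ i, ρ i ≠ 0) :
    ∃ σ : Fin k → Fin n, StrictMono σ ∧ ρ = Fin.succ ∘ σ :=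
  ⟨fun i => (ρ i).pred (h0 i), fun _ _ hab => Fin.pred_lt_pred_iff.2 (hρ hab),
    funext fun _ => (Fin.succ_pred _ _).symm⟩

namespace Matrix

variable {K : Type*} {m n l : ℕ}

section Elimination

variable [Field K] (Q : Matrix (Fin (n + 1)) (Fin (l + 1)) K)

/-- One step of Gaussian elimination by column operations: multiples of column `0` are subtracted
from the others so that the first row becomes `(Q 0 0, 0, …, 0)` when `Q 0 0 ≠ 0`. -/
def clearFirstRow : Matrix (Fin (n + 1)) (Fin (l + 1)) K :=
  of fun i j => Q i j - (Fin.cons 0 fun j => Q 0 j.succ / Q 0 0 : Fin (l + 1) → K) j * Q i 0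

def firstSchurComplement : Matrix (Fin n) (Fin l) K :=
  (clearFirstRow Q).submatrix Fin.succ Fin.succ

theorem clearFirstRow_apply_succ_right (i : Fin (n + 1)) (j : Fin l) :
    clearFirstRow Q i j.succ = Q i j.succ - Q 0 j.succ / Q 0 0 * Q i 0 := by
  simp [clearFirstRow]

theorem firstSchurComplement_apply (i : Fin n) (j : Fin l) :
    firstSchurComplement Q i j = Q i.succ j.succ - Q 0 j.succ / Q 0 0 * Q i.succ 0 :=
  clearFirstRow_apply_succ_right Q i.succ j

theorem det_submatrix_clearFirstRow (ρ : Fin (l + 1) → Fin (n + 1)) :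
    ((clearFirstRow Q).submatrix ρ id).det = (Q.submatrix ρ id).det := by
  rw [← det_transpose, ← det_transpose (Q.submatrix ρ id)]
  refine det_eq_of_forall_row_eq_smul_add_const
    (-(Fin.cons 0 fun j => Q 0 j.succ / Q 0 0 : Fin (l + 1) → K)) 0 (by simp) fun j i => ?_
  simp [clearFirstRow, sub_eq_add_neg]

theorem det_submatrix_cons_zero (hQ : Q 0 0 ≠ 0) (σ : Fin l → Fin n) :
    (Q.submatrix (Fin.cons 0 (Fin.succ ∘ σ)) id).det =
      Q 0 0 * ((firstSchurComplement Q).submatrix σ id).det := by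
  rw [← det_submatrix_clearFirstRow, det_succ_row_zero, Fin.sum_univ_succ]
  have hrow : ∀ j : Fin l, clearFirstRow Q 0 j.succ = 0 := fun j => by
    rw [clearFirstRow_apply_succ_right, div_mul_cancel₀ _ hQ, sub_self]
  simp only [submatrix_apply, id_eq, Fin.cons_zero, hrow,
    mul_zero, zero_mul, sum_const_zero, add_zero, Fin.val_zero, pow_zero, one_mul]
  congr 1
  simp [clearFirstRow]

theorem det_submatrix_castLE_succ (hQ : Q 0 0 ≠ 0) (h : l + 1 ≤ n + 1) :
    (Q.submatrix (Fin.castLE h) id).det = Q 0 0 *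
      ((firstSchurComplement Q).submatrix (Fin.castLE (Nat.le_of_succ_le_succ h)) id).det := by
  rw [← det_submatrix_cons_zero Q hQ]
  congr
  funext i
  cases i using Fin.cases <;> simp

end Elimination

variable [Field K] [LinearOrder K]

/-- Strict diagonal dominance by columns, the diagonal of the `m × l` matrix `Q` sitting in its
first `l` rows. -/
def StrictColDiagDominant (h : l ≤ m) (Q : Matrix (Fin m) (Fin l) K) : Prop :=
  ∀ j, ∑ i ∈ univ.erase (Fin.castLE h j), |Q i j| < Q (Fin.castLE h j) j

theorem StrictColDiagDominant.sum_abs_succ_zero_lt {h : l + 1 ≤ n + 1}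
    {Q : Matrix (Fin (n + 1)) (Fin (l + 1)) K} (hQ : StrictColDiagDominant h Q) :
    ∑ i : Fin n, |Q i.succ 0| < Q 0 0 := by
  simpa only [Fin.castLE_zero, Fin.sum_erase_zero] using hQ 0

variable [IsStrictOrderedRing K]

theorem abs_det_submatrix_succ_comp_le (Q : Matrix (Fin (n + 1)) (Fin (l + 1)) K)
    {σ : Fin (l + 1) → Fin n} (hσ : StrictMono σ) {D : K}
    (hD : ∀ τ : Fin l → Fin n, StrictMono τ → |((firstSchurComplement Q).submatrix τ id).det| ≤ D) :
    |(Q.submatrix (Fin.succ ∘ σ) id).det| ≤ (∑ i : Fin n, |Q i.succ 0|) * D := by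
  have hD0 : 0 ≤ D := (abs_nonneg _).trans (hD _ (hσ.comp Fin.strictMono_succ))
  rw [← det_submatrix_clearFirstRow, det_succ_column_zero]
  calc _ ≤ ∑ k : Fin (l + 1), |Q (σ k).succ 0| * D := by
        refine (abs_sum_le_sum_abs _ _).trans (sum_le_sum fun k _ => ?_)
        rw [abs_mul, abs_mul, abs_pow, abs_neg, abs_one, one_pow, one_mul]
        refine mul_le_mul (by simp [clearFirstRow]) (hD _ (hσ.comp (Fin.strictMono_succAbove k)))
          (abs_nonneg _) (abs_nonneg _)
    _ = (∑ i ∈ univ.map ⟨σ, hσ.injective⟩, |Q i.succ 0|) * D := by rw [sum_map, sum_mul]; rfl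
    _ ≤ (∑ i : Fin n, |Q i.succ 0|) * D :=
        mul_le_mul_of_nonneg_right (sum_le_univ_sum_of_nonneg fun _ => abs_nonneg _) hD0

namespace StrictColDiagDominant

theorem diag_pos {h : l ≤ m} {Q : Matrix (Fin m) (Fin l) K} (hQ : StrictColDiagDominant h Q)
    (j : Fin l) : 0 < Q (Fin.castLE h j) j :=
  (sum_nonneg fun _ _ => abs_nonneg _).trans_lt (hQ j)

theorem firstSchurComplement {h : l + 1 ≤ n + 1} {Q : Matrix (Fin (n + 1)) (Fin (l + 1)) K}
    (hQ : StrictColDiagDominant h Q) :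
    StrictColDiagDominant (Nat.le_of_succ_le_succ h) (firstSchurComplement Q) := by
  intro j
  set p := Fin.castLE (Nat.le_of_succ_le_succ h) j
  set a := Q 0 j.succ / Q 0 0
  have hQ00 : 0 < Q 0 0 := by simpa using hQ.diag_pos 0
  have hcol : |Q 0 j.succ| + ∑ i ∈ univ.erase p, |Q i.succ j.succ| < Q p.succ j.succ := by
    simpa only [Fin.castLE_succ, Fin.sum_erase_succ] using hQ j.succ
  have ha : |a| * Q 0 0 = |Q 0 j.succ| := by
    rw [abs_div, abs_of_pos hQ00, div_mul_cancel₀ _ hQ00.ne']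
  have hoff : ∑ i ∈ univ.erase p, |Q i.succ j.succ - a * Q i.succ 0| ≤
      ∑ i ∈ univ.erase p, |Q i.succ j.succ| + |a| * (∑ i : Fin n, |Q i.succ 0| - |Q p.succ 0|) := by
    rw [← sum_erase_eq_sub (mem_univ _), mul_sum, ← sum_add_distrib]
    exact sum_le_sum fun i _ => (abs_sub _ _).trans_eq (by rw [abs_mul])
  have hdiag : Q p.succ j.succ - |a| * |Q p.succ 0| ≤ Q p.succ j.succ - a * Q p.succ 0 := by
    rw [← abs_mul]
    linarith [le_abs_self (a * Q p.succ 0)]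
  have hscale : |a| * ∑ i : Fin n, |Q i.succ 0| ≤ |a| * Q 0 0 :=
    mul_le_mul_of_nonneg_left hQ.sum_abs_succ_zero_lt.le (abs_nonneg a)
  simp only [firstSchurComplement_apply]
  linarith

theorem det_submatrix_castLE_pos {h : l ≤ m} {Q : Matrix (Fin m) (Fin l) K}
    (hQ : StrictColDiagDominant h Q) : 0 < (Q.submatrix (Fin.castLE h) id).det := by
  induction l generalizing m with
  | zero => simp
  | succ l ih =>
    obtain _ | n := m
    · omega
    have hQ00 : 0 < Q 0 0 := by simpa using hQ.diag_pos 0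
    rw [det_submatrix_castLE_succ Q hQ00.ne']
    exact mul_pos hQ00 (ih hQ.firstSchurComplement)

theorem abs_det_submatrix_le {h : l ≤ m} {Q : Matrix (Fin m) (Fin l) K}
    (hQ : StrictColDiagDominant h Q) {ρ : Fin l → Fin m} (hρ : StrictMono ρ) :
    |(Q.submatrix ρ id).det| ≤ (Q.submatrix (Fin.castLE h) id).det := by
  induction l generalizing m with
  | zero => simp
  | succ l ih =>
    obtain _ | n := m
    · omega
    have hQ00 : 0 < Q 0 0 := by simpa using hQ.diag_pos 0
    have hD := hQ.firstSchurComplement.det_submatrix_castLE_pos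
    rw [det_submatrix_castLE_succ Q hQ00.ne']
    by_cases h0 : ρ 0 = 0
    · obtain ⟨σ, hσ, hρσ⟩ := (hρ.comp Fin.strictMono_succ).exists_eq_succ_comp
        fun i => (h0 ▸ hρ (Fin.succ_pos i)).ne'
      have hρ' : ρ = Fin.cons 0 (Fin.succ ∘ σ) := by
        rw [← hρσ, ← h0]
        exact (Fin.cons_self_tail ρ).symm
      rw [hρ', det_submatrix_cons_zero Q hQ00.ne', abs_mul, abs_of_pos hQ00]
      exact mul_le_mul_of_nonneg_left (ih hQ.firstSchurComplement hσ) hQ00.le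
    · obtain ⟨σ, hσ, rfl⟩ := hρ.exists_eq_succ_comp fun i hi =>
        h0 (Fin.le_zero_iff.1 (hi ▸ hρ.monotone (Fin.zero_le i)))
      calc _ ≤ (∑ i : Fin n, |Q i.succ 0|) * _ :=
            abs_det_submatrix_succ_comp_le Q hσ fun τ hτ => ih hQ.firstSchurComplement hτ
        _ ≤ Q 0 0 * _ := mul_le_mul_of_nonneg_right hQ.sum_abs_succ_zero_lt.le hD.le

end StrictColDiagDominant

end Matrix

theorem det_first_rows_is_max_general (m l : ℕ) (hml : l < m)
    (Q : Matrix (Fin m) (Fin l) ℝ)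
    (hQ : ∀ j : Fin l,
      ∑ i ∈ Finset.univ.erase (Fin.castLE hml.le j), |Q i j|
        < Q (Fin.castLE hml.le j) j) :
    0 ≤ (Q.submatrix (Fin.castLE hml.le) id).det ∧
    ∀ ρ : Fin l → Fin m, StrictMono ρ →
      |(Q.submatrix ρ id).det| ≤ (Q.submatrix (Fin.castLE hml.le) id).det :=
  have hQ : StrictColDiagDominant hml.le Q := hQ
  ⟨hQ.det_submatrix_castLE_pos.le, fun _ => hQ.abs_det_submatrix_le⟩

/-- Let `m > l ≥ 1` and `Q` an `m × l` real matrix with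
`q_{jj} > ∑_{i ≠ j} |q_{ij}|` for every column `j`.  Then the determinant of
the `l × l` submatrix `S₁` formed by the first `l` rows of `Q` is nonnegative
and dominates the absolute value of the determinant of every `l × l`
submatrix of `Q` obtained by selecting `l` rows (in increasing order). -/
theorem det_first_rows_is_max (m l : ℕ) (hl : 1 ≤ l) (hml : l < m)
    (Q : Matrix (Fin m) (Fin l) ℝ)
    (hQ : ∀ j : Fin l,
      ∑ i ∈ Finset.univ.erase (Fin.castLE hml.le j), |Q i j|
        < Q (Fin.castLE hml.le j) j) :
    0 ≤ (Q.submatrix (Fin.castLE hml.le) id).det ∧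
    ∀ ρ : Fin l → Fin m, StrictMono ρ →
      |(Q.submatrix ρ id).det| ≤ (Q.submatrix (Fin.castLE hml.le) id).det :=
  det_first_rows_is_max_general m l hml Q hQ
end

section
/- Let P be an m×m real symmetric matrix with p_{ij} ≤ 0 for i ≠ j, and row sums p̄_i := ∑_j p_{ij} satisfying 0 < r₁ ≤ p̄_i ≤ r₂ for all i. If α ∈ ℝ^m solves Pα = β, then for every pair i ≠ j, |α_i − α_j| ≤ m(m−1)(r₂/r₁) · |β|_∞ / (|p_{ij}| + r₁), where |β|_∞ = max_i |β_i|. -/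
open Finset Matrix

/-! Test `P α = β` against the sign vector `ε = sign (α - c)`, where `c` is the midpoint of `α i`
and `α j`. For symmetric `P`,
`x ⬝ P y = ∑ₖ p̄ₖ xₖ yₖ + ½ ∑ₖₗ (-pₖₗ) (xₖ - xₗ) (yₖ - yₗ)`, and when the off-diagonal entries are
nonpositive and `x`, `y` monovary every term of the double sum is nonnegative; hence
`ε ⬝ P (α - c) ≥ (r₁ + 2 |pᵢⱼ|) (αᵢ - αⱼ)`. On the other hand `ε ⬝ P (α - c) = ε ⬝ β - c ∑ₖ εₖ p̄ₖ`,
where `|c| ≤ ‖α‖₁ ≤ ‖β‖₁ / r₁` (the same identity with `x = sign α`, `y = α`) and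
`|∑ₖ εₖ p̄ₖ| ≤ (m - 1) r₂ - r₁` because `εᵢ = 1` and `εⱼ = -1`. Altogether
`(r₁ + 2 |pᵢⱼ|) (αᵢ - αⱼ) ≤ (m - 1) (r₂ / r₁) ‖β‖₁ ≤ m (m - 1) (r₂ / r₁) ‖β‖∞`. -/

variable {R ι : Type*}

theorem Matrix.IsSymm.two_mul_dotProduct_mulVec [CommRing R] [Fintype ι] {P : Matrix ι ι R}
    (hP : P.IsSymm) (x y : ι → R) :
    2 * (x ⬝ᵥ P *ᵥ y) = 2 * ∑ k, (∑ l, P k l) * (x k * y k) -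
      ∑ k, ∑ l, P k l * ((x k - x l) * (y k - y l)) := by
  have h_row : x ⬝ᵥ P *ᵥ y = ∑ k, (∑ l, P k l) * (x k * y k) -
      ∑ k, ∑ l, P k l * (x k * (y k - y l)) := by
    simp only [dotProduct, mulVec, sum_mul, mul_sum, ← sum_sub_distrib]
    exact sum_congr rfl fun k _ => sum_congr rfl fun l _ => by ring
  have h_swap : ∑ k, ∑ l, P k l * (x l * (y l - y k)) =
      ∑ k, ∑ l, P k l * (x k * (y k - y l)) := by
    rw [sum_comm]
    simp only [hP.apply]
  have h_sym : ∑ k, ∑ l, P k l * ((x k - x l) * (y k - y l)) =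
      2 * ∑ k, ∑ l, P k l * (x k * (y k - y l)) := by
    rw [two_mul]
    nth_rw 2 [← h_swap]
    simp only [← sum_add_distrib]
    exact sum_congr rfl fun k _ => sum_congr rfl fun l _ => by ring
  rw [h_row, h_sym]
  ring

section LinearOrderedField

variable [Field R] [LinearOrder R] [IsStrictOrderedRing R]

theorem monovary_sign_comp (γ : ι → R) : Monovary (fun k => (SignType.sign (γ k) : R)) γ := by
  intro k l h
  simp only [sign_apply]
  split_ifs <;> norm_num <;> linarith

theorem abs_sign_le_one (a : R) : |(SignType.sign a : R)| ≤ 1 := by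
  rcases lt_trichotomy a 0 with h | h | h <;> simp [h, sign_neg, sign_pos]

theorem neg_mul_sub_mul_sub_nonneg {P : Matrix ι ι R} (hoff : ∀ k l, k ≠ l → P k l ≤ 0)
    {x y : ι → R} (hxy : Monovary x y) (k l : ι) : 0 ≤ -P k l * ((x k - x l) * (y k - y l)) := by
  rcases eq_or_ne k l with rfl | hkl
  · simp
  · exact mul_nonneg (neg_nonneg.2 (hoff k l hkl)) (hxy.sub_mul_sub_nonneg l k)

variable [Fintype ι] {P : Matrix ι ι R}

theorem sum_rowSum_mul_le_dotProduct_mulVec (hP : P.IsSymm)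
    (hoff : ∀ k l, k ≠ l → P k l ≤ 0) {x y : ι → R} (hxy : Monovary x y) :
    ∑ k, (∑ l, P k l) * (x k * y k) ≤ x ⬝ᵥ P *ᵥ y := by
  have h := hP.two_mul_dotProduct_mulVec x y
  have h_nonneg : 0 ≤ ∑ k, ∑ l, -P k l * ((x k - x l) * (y k - y l)) :=
    sum_nonneg fun k _ => sum_nonneg fun l _ => neg_mul_sub_mul_sub_nonneg hoff hxy k l
  simp only [neg_mul, sum_neg_distrib] at h_nonneg
  linarith

theorem sum_rowSum_mul_add_le_dotProduct_mulVec (hP : P.IsSymm)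
    (hoff : ∀ k l, k ≠ l → P k l ≤ 0) {x y : ι → R} (hxy : Monovary x y) {i j : ι}
    (hij : i ≠ j) :
    ∑ k, (∑ l, P k l) * (x k * y k) + -P i j * ((x i - x j) * (y i - y j)) ≤
      x ⬝ᵥ P *ᵥ y := by
  have h := hP.two_mul_dotProduct_mulVec x y
  set f : ι → ι → R := fun k l => -P k l * ((x k - x l) * (y k - y l)) with hf
  have hf_nonneg : ∀ k l, 0 ≤ f k l := neg_mul_sub_mul_sub_nonneg hoff hxy
  have hf_symm : f j i = f i j := by simp only [hf, hP.apply i j]; ring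
  have h_pair : f i j + f j i ≤ ∑ k, ∑ l, f k l :=
    calc f i j + f j i ≤ ∑ l, f i l + ∑ l, f j l :=
          add_le_add (single_le_sum (fun l _ => hf_nonneg i l) (mem_univ j))
            (single_le_sum (fun l _ => hf_nonneg j l) (mem_univ i))
      _ ≤ ∑ k, ∑ l, f k l :=
          add_le_sum (fun k _ => sum_nonneg fun l _ => hf_nonneg k l) (mem_univ i)
            (mem_univ j) hij
  simp only [hf, neg_mul, sum_neg_distrib] at h_pair hf_symm
  linarith

theorem sign_dotProduct_le_sum_abs (γ v : ι → R) :
    (fun k => (SignType.sign (γ k) : R)) ⬝ᵥ v ≤ ∑ k, |v k| :=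
  sum_le_sum fun k _ => calc
    (SignType.sign (γ k) : R) * v k ≤ |(SignType.sign (γ k) : R)| * |v k| :=
      (le_abs_self _).trans (abs_mul _ _).le
    _ ≤ |v k| := mul_le_of_le_one_left (abs_nonneg _) (abs_sign_le_one _)

theorem mul_sum_abs_le_sum_abs_mulVec (hP : P.IsSymm) (hoff : ∀ k l, k ≠ l → P k l ≤ 0)
    {r : R} (hrow : ∀ k, r ≤ ∑ l, P k l) (α : ι → R) :
    r * ∑ k, |α k| ≤ ∑ k, |(P *ᵥ α) k| :=
  calc r * ∑ k, |α k| ≤ ∑ k, (∑ l, P k l) * ((SignType.sign (α k) : R) * α k) := by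
        rw [mul_sum]
        exact sum_le_sum fun k _ => by
          rw [sign_mul_self]; exact mul_le_mul_of_nonneg_right (hrow k) (abs_nonneg _)
    _ ≤ (fun k => (SignType.sign (α k) : R)) ⬝ᵥ P *ᵥ α :=
        sum_rowSum_mul_le_dotProduct_mulVec hP hoff (monovary_sign_comp α)
    _ ≤ ∑ k, |(P *ᵥ α) k| := sign_dotProduct_le_sum_abs α _

theorem sum_le_card_sub_one_mul_add {f : ι → R} {a b : R} (ha : ∀ k, f k ≤ a) {j : ι}
    (hj : f j ≤ b) : ∑ k, f k ≤ (Fintype.card ι - 1) * a + b := by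
  classical
  rw [← add_sum_erase _ _ (mem_univ j)]
  have h_rest := sum_le_card_nsmul (univ.erase j) f a fun k _ => ha k
  rw [card_erase_of_mem (mem_univ j), card_univ, nsmul_eq_mul,
    Nat.cast_pred (Fintype.card_pos_iff.2 ⟨j⟩)] at h_rest
  linarith

theorem abs_sum_mul_le_card_sub_one_mul_sub {ε v : ι → R} {r₁ r₂ : R}
    (hv : ∀ k, r₁ ≤ v k ∧ v k ≤ r₂) (hr₁ : 0 ≤ r₁) (hε : ∀ k, |ε k| ≤ 1) {i j : ι}
    (hi : ε i = 1) (hj : ε j = -1) :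
    |∑ k, ε k * v k| ≤ (Fintype.card ι - 1) * r₂ - r₁ := by
  have h_term : ∀ k, |ε k * v k| ≤ r₂ := fun k => by
    rw [abs_mul, abs_of_nonneg (hr₁.trans (hv k).1)]
    exact (mul_le_of_le_one_left (hr₁.trans (hv k).1) (hε k)).trans (hv k).2
  rw [abs_le]
  constructor
  · have h := sum_le_card_sub_one_mul_add (f := fun k => -(ε k * v k))
      (fun k => (neg_le_abs _).trans (h_term k)) (j := i) (b := -r₁)
      (by simpa [hi] using (hv i).1)
    simp only [sum_neg_distrib] at h
    linarith
  · have h := sum_le_card_sub_one_mul_add (f := fun k => ε k * v k) (j := j) (b := -r₁)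
      (fun k => le_of_abs_le (h_term k)) (by simpa [hj] using (hv j).1)
    linarith

theorem mul_sub_le_sign_dotProduct_mulVec (hP : P.IsSymm) (hoff : ∀ k l, k ≠ l → P k l ≤ 0)
    {r₁ : R} (hr₁ : 0 ≤ r₁) (hrow : ∀ k, r₁ ≤ ∑ l, P k l) (α : ι → R) {i j : ι} {c : R}
    (hi : c < α i) (hj : α j < c) :
    (r₁ + 2 * |P i j|) * (α i - α j) ≤
      (fun k => (SignType.sign (α k - c) : R)) ⬝ᵥ P *ᵥ (fun k => α k - c) := by
  have hij : i ≠ j := fun h => by subst h; linarith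
  have h := sum_rowSum_mul_add_le_dotProduct_mulVec hP hoff
    (monovary_sign_comp fun k => α k - c) hij
  rw [sign_pos (sub_pos.2 hi), sign_neg (sub_neg.2 hj)] at h
  simp only [sign_mul_self] at h
  have h_diag : r₁ * (α i - α j) ≤ ∑ k, (∑ l, P k l) * |α k - c| :=
    calc r₁ * (α i - α j) = r₁ * |α i - c| + r₁ * |α j - c| := by
          rw [abs_of_pos (sub_pos.2 hi), abs_of_neg (sub_neg.2 hj)]; ring
      _ ≤ (∑ l, P i l) * |α i - c| + (∑ l, P j l) * |α j - c| := by
          gcongr <;> exact hrow _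
      _ ≤ ∑ k, (∑ l, P k l) * |α k - c| :=
          add_le_sum (f := fun k => (∑ l, P k l) * |α k - c|)
            (fun k _ => mul_nonneg (hr₁.trans (hrow k)) (abs_nonneg _)) (mem_univ i) (mem_univ j)
            hij
  rw [abs_of_nonpos (hoff i j hij)]
  simp only [SignType.coe_one, SignType.coe_neg_one, sub_sub_sub_cancel_right] at h
  linear_combination h + h_diag

theorem abs_le_sum_abs_mulVec_div (hP : P.IsSymm) (hoff : ∀ k l, k ≠ l → P k l ≤ 0)
    {r : R} (hr : 0 < r) (hrow : ∀ k, r ≤ ∑ l, P k l) (α : ι → R) (k : ι) :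
    |α k| ≤ (∑ k, |(P *ᵥ α) k|) / r := by
  rw [le_div_iff₀ hr, mul_comm]
  calc r * |α k| ≤ r * ∑ k, |α k| :=
        mul_le_mul_of_nonneg_left (single_le_sum (fun k _ => abs_nonneg (α k)) (mem_univ k)) hr.le
    _ ≤ ∑ k, |(P *ᵥ α) k| := mul_sum_abs_le_sum_abs_mulVec hP hoff hrow α

theorem mul_sub_le_sum_abs_mulVec (hP : P.IsSymm) (hoff : ∀ k l, k ≠ l → P k l ≤ 0)
    {r₁ r₂ : R} (hr₁ : 0 < r₁) (hrow : ∀ k, r₁ ≤ ∑ l, P k l ∧ ∑ l, P k l ≤ r₂)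
    (α : ι → R) {i j : ι} (hji : α j < α i) :
    (r₁ + 2 * |P i j|) * (α i - α j) ≤
      (Fintype.card ι - 1) * (r₂ / r₁) * ∑ k, |(P *ᵥ α) k| := by
  set N := ∑ k, |(P *ᵥ α) k|
  set c := (α i + α j) / 2 with hc
  have hci : 0 < α i - c := by rw [hc]; linarith
  have hcj : α j - c < 0 := by rw [hc]; linarith
  set ε : ι → R := fun k => (SignType.sign (α k - c) : R)
  have h_lower := mul_sub_le_sign_dotProduct_mulVec hP hoff hr₁.le (fun k => (hrow k).1) α
    (sub_pos.1 hci) (sub_neg.1 hcj)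
  have h_split : ε ⬝ᵥ P *ᵥ (fun k => α k - c) = ε ⬝ᵥ P *ᵥ α - c * ∑ k, ε k * ∑ l, P k l := by
    simp only [dotProduct, mulVec, mul_sub, sum_sub_distrib, mul_sum]
    congr 1
    exact sum_congr rfl fun k _ => sum_congr rfl fun l _ => by ring
  have h_c : |c| ≤ N / r₁ := by
    have hi := abs_le_sum_abs_mulVec_div hP hoff hr₁ (fun k => (hrow k).1) α i
    have hj := abs_le_sum_abs_mulVec_div hP hoff hr₁ (fun k => (hrow k).1) α j
    rw [hc, abs_div, abs_two]
    linarith [abs_add_le (α i) (α j)]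
  have h_rowSums := abs_sum_mul_le_card_sub_one_mul_sub hrow hr₁.le
    (fun k => abs_sign_le_one (α k - c)) (i := i) (j := j)
    (by simp [sign_pos hci]) (by simp [sign_neg hcj])
  have h_cross : -(c * ∑ k, ε k * ∑ l, P k l) ≤ N / r₁ * ((Fintype.card ι - 1) * r₂ - r₁) :=
    calc -(c * ∑ k, ε k * ∑ l, P k l) ≤ |c| * |∑ k, ε k * ∑ l, P k l| := by
          rw [← abs_mul]; exact neg_le_abs _
      _ ≤ N / r₁ * ((Fintype.card ι - 1) * r₂ - r₁) :=
          mul_le_mul h_c h_rowSums (abs_nonneg _) (h_c.trans' (abs_nonneg _))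
  calc (r₁ + 2 * |P i j|) * (α i - α j) ≤ ε ⬝ᵥ P *ᵥ α - c * ∑ k, ε k * ∑ l, P k l :=
        h_split ▸ h_lower
    _ ≤ N + N / r₁ * ((Fintype.card ι - 1) * r₂ - r₁) := by
        linarith [sign_dotProduct_le_sum_abs (fun k => α k - c) (P *ᵥ α)]
    _ = (Fintype.card ι - 1) * (r₂ / r₁) * N := by
        field_simp
        ring

theorem mul_abs_sub_le_sum_abs_mulVec (hP : P.IsSymm) (hoff : ∀ k l, k ≠ l → P k l ≤ 0)
    {r₁ r₂ : R} (hr₁ : 0 < r₁) (hrow : ∀ k, r₁ ≤ ∑ l, P k l ∧ ∑ l, P k l ≤ r₂)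
    (α : ι → R) (i j : ι) :
    (r₁ + 2 * |P i j|) * |α i - α j| ≤
      (Fintype.card ι - 1) * (r₂ / r₁) * ∑ k, |(P *ᵥ α) k| := by
  rcases lt_trichotomy (α j) (α i) with hji | heq | hij
  · rw [abs_of_pos (sub_pos.2 hji)]
    exact mul_sub_le_sum_abs_mulVec hP hoff hr₁ hrow α hji
  · have h_card : (1 : R) ≤ Fintype.card ι := by exact_mod_cast Fintype.card_pos_iff.2 ⟨i⟩
    have h_ratio : 0 ≤ r₂ / r₁ :=
      div_nonneg (hr₁.le.trans ((hrow i).1.trans (hrow i).2)) hr₁.le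
    rw [heq, sub_self, abs_zero, mul_zero]
    exact mul_nonneg (mul_nonneg (sub_nonneg.2 h_card) h_ratio)
      (sum_nonneg fun k _ => abs_nonneg _)
  · rw [abs_sub_comm, abs_of_pos (sub_pos.2 hij), ← hP.apply i j]
    exact mul_sub_le_sum_abs_mulVec hP hoff hr₁ hrow α hij

end LinearOrderedField

theorem alpha_diff_estimate_general (m : ℕ)
    (P : Matrix (Fin m) (Fin m) ℝ) (hsymm : P.IsSymm)
    (hoff : ∀ i j, i ≠ j → P i j ≤ 0)
    (r₁ r₂ : ℝ) (hr₁ : 0 < r₁)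
    (hrow : ∀ i, r₁ ≤ ∑ j, P i j ∧ ∑ j, P i j ≤ r₂)
    (α β : Fin m → ℝ) (hsol : P.mulVec α = β)
    (i j : Fin m) :
    |α i - α j| ≤ m * (m - 1) * (r₂ / r₁) *
      (Finset.univ.sup' ⟨i, Finset.mem_univ i⟩ (fun k => |β k|)) /
        (|P i j| + r₁) := by
  set B := Finset.univ.sup' ⟨i, Finset.mem_univ i⟩ (fun k => |β k|)
  have h_sum : ∑ k, |β k| ≤ m * B := by
    simpa using sum_le_card_nsmul univ (fun k => |β k|) B
      fun k _ => le_sup' (fun k => |β k|) (mem_univ k)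
  have h_factor : 0 ≤ ((m : ℝ) - 1) * (r₂ / r₁) := by
    have h_m : (1 : ℝ) ≤ m := by exact_mod_cast i.pos
    exact mul_nonneg (sub_nonneg.2 h_m)
      (div_nonneg (hr₁.le.trans ((hrow i).1.trans (hrow i).2)) hr₁.le)
  have h_key := mul_abs_sub_le_sum_abs_mulVec hsymm hoff hr₁ hrow α i j
  rw [Fintype.card_fin, hsol] at h_key
  rw [le_div_iff₀ (by positivity)]
  calc |α i - α j| * (|P i j| + r₁) ≤ (r₁ + 2 * |P i j|) * |α i - α j| := by
        nlinarith [abs_nonneg (P i j), abs_nonneg (α i - α j)]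
    _ ≤ ((m : ℝ) - 1) * (r₂ / r₁) * (m * B) :=
        h_key.trans (mul_le_mul_of_nonneg_left h_sum h_factor)
    _ = m * (m - 1) * (r₂ / r₁) * B := by ring

/-- If `P` is a real symmetric `m × m` matrix with nonpositive off-diagonal
entries and all row sums in `[r₁, r₂]` with `0 < r₁ ≤ r₂`, and `P α = β`, then
`|α_i − α_j| ≤ m (m−1) (r₂/r₁) |β|_∞ / (|p_{ij}| + r₁)` for all `i ≠ j`. -/
theorem alpha_diff_estimate (m : ℕ) (hm : 1 ≤ m)
    (P : Matrix (Fin m) (Fin m) ℝ) (hsymm : P.IsSymm)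
    (hoff : ∀ i j, i ≠ j → P i j ≤ 0)
    (r₁ r₂ : ℝ) (hr₁ : 0 < r₁) (hr₁₂ : r₁ ≤ r₂)
    (hrow : ∀ i, r₁ ≤ ∑ j, P i j ∧ ∑ j, P i j ≤ r₂)
    (α β : Fin m → ℝ) (hsol : P.mulVec α = β)
    (i j : Fin m) (hij : i ≠ j) :
    |α i - α j| ≤ m * (m - 1) * (r₂ / r₁) *
      (Finset.univ.sup' ⟨i, Finset.mem_univ i⟩ (fun k => |β k|)) /
        (|P i j| + r₁) :=
  alpha_diff_estimate_general m P hsymm hoff r₁ r₂ hr₁ hrow α β hsol i j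
end

section
/- In the 2×2 case of the matrix estimate: if P is a 2×2 real symmetric matrix with p_{12} = p_{21} ≤ 0 and row sums p̄₁, p̄₂ ∈ [r₁, r₂] with 0 < r₁ ≤ r₂, and α solves Pα = β, then det P ≥ r₁(r₁ + |p_{12}|) > 0 and |α₁ − α₂| ≤ 2 r₂ |β|_∞ / (r₁(r₁ + |p_{12}|)). -/
/-!
With `s₀, s₁` the row sums of `P` and `b = p₀₁ ≤ 0`, symmetry gives
`det P = s₀ s₁ + |b| (s₀ + s₁) ≥ r₁ (r₁ + |b|)`, and Cramer's rule gives
`det P · (α₀ - α₁) = s₁ β₀ - s₀ β₁`, whose absolute value is at most `2 r₂ |β|_∞`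
because `0 ≤ sᵢ ≤ r₂`.
-/

namespace Matrix

section CommRing

variable {R : Type*} [CommRing R] {P : Matrix (Fin 2) (Fin 2) R}

theorem IsSymm.det_fin_two_eq_rowSum (hP : P.IsSymm) :
    P.det = (∑ j, P 0 j) * (∑ j, P 1 j) - P 0 1 * ((∑ j, P 0 j) + ∑ j, P 1 j) := by
  simp only [det_fin_two, Fin.sum_univ_two, hP.apply 0 1]
  ring

theorem IsSymm.det_mul_sub_eq_rowSum (hP : P.IsSymm) (α : Fin 2 → R) :
    P.det * (α 0 - α 1) = (∑ j, P 1 j) * (P *ᵥ α) 0 - (∑ j, P 0 j) * (P *ᵥ α) 1 := by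
  simp only [det_fin_two, mulVec, dotProduct, Fin.sum_univ_two, hP.apply 0 1]
  ring

end CommRing

theorem IsSymm.mul_add_abs_le_det_fin_two {𝕜 : Type*} [CommRing 𝕜] [LinearOrder 𝕜]
    [IsStrictOrderedRing 𝕜] {P : Matrix (Fin 2) (Fin 2) 𝕜} (hP : P.IsSymm) (hoff : P 0 1 ≤ 0)
    {r : 𝕜} (hr : 0 ≤ r) (hrow : ∀ i, r ≤ ∑ j, P i j) :
    r * (r + |P 0 1|) ≤ P.det := by
  rw [hP.det_fin_two_eq_rowSum, abs_of_nonpos hoff]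
  have h₀ := hrow 0
  have h₁ := hrow 1
  nlinarith [mul_le_mul h₀ h₁ hr (hr.trans h₀), mul_le_mul_of_nonpos_left h₀ hoff,
    mul_le_mul_of_nonpos_left h₁ hoff]

end Matrix

theorem abs_mul_sub_mul_le_two_mul_max {𝕜 : Type*} [CommRing 𝕜] [LinearOrder 𝕜]
    [IsStrictOrderedRing 𝕜] {s t r : 𝕜} (hs : 0 ≤ s) (ht : 0 ≤ t) (hsr : s ≤ r) (htr : t ≤ r)
    (x y : 𝕜) : |s * x - t * y| ≤ 2 * r * max |x| |y| :=
  calc |s * x - t * y| ≤ s * |x| + t * |y| := by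
        simpa only [abs_mul, abs_of_nonneg hs, abs_of_nonneg ht] using abs_sub (s * x) (t * y)
    _ ≤ r * max |x| |y| + r * max |x| |y| := by
        have hr : 0 ≤ r := hs.trans hsr
        gcongr
        exacts [le_max_left _ _, le_max_right _ _]
    _ = 2 * r * max |x| |y| := by ring

theorem two_by_two_estimate_general
    (P : Matrix (Fin 2) (Fin 2) ℝ) (hsymm : P.IsSymm)
    (hoff : P 0 1 ≤ 0)
    (r₁ r₂ : ℝ) (hr₁ : 0 < r₁)
    (hrow : ∀ i, r₁ ≤ ∑ j, P i j ∧ ∑ j, P i j ≤ r₂)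
    (α β : Fin 2 → ℝ) (hsol : P.mulVec α = β) :
    r₁ * (r₁ + |P 0 1|) ≤ P.det ∧ 0 < r₁ * (r₁ + |P 0 1|) ∧
    |α 0 - α 1| ≤ 2 * r₂ * max |β 0| |β 1| / (r₁ * (r₁ + |P 0 1|)) := by
  have hdet := hsymm.mul_add_abs_le_det_fin_two hoff hr₁.le fun i ↦ (hrow i).1
  have hpos : 0 < r₁ * (r₁ + |P 0 1|) := by positivity
  refine ⟨hdet, hpos, ?_⟩
  have hrowSum_nonneg : ∀ i, 0 ≤ ∑ j, P i j := fun i ↦ hr₁.le.trans (hrow i).1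
  have hnum : |α 0 - α 1| * P.det ≤ 2 * r₂ * max |β 0| |β 1| := by
    rw [← abs_of_pos (hpos.trans_le hdet), ← abs_mul, mul_comm,
      hsymm.det_mul_sub_eq_rowSum, hsol]
    exact abs_mul_sub_mul_le_two_mul_max (hrowSum_nonneg 1) (hrowSum_nonneg 0)
      (hrow 1).2 (hrow 0).2 _ _
  rw [le_div_iff₀ hpos]
  exact (mul_le_mul_of_nonneg_left hdet (abs_nonneg _)).trans hnum

/-- The `2 × 2` case of the matrix estimate: if `P` is real symmetric with
`p₀₁ = p₁₀ ≤ 0` and row sums in `[r₁, r₂]`, `0 < r₁ ≤ r₂`, and `P α = β`, then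
`det P ≥ r₁ (r₁ + |p₀₁|) > 0` and
`|α₀ − α₁| ≤ 2 r₂ |β|_∞ / (r₁ (r₁ + |p₀₁|))`. -/
theorem two_by_two_estimate
    (P : Matrix (Fin 2) (Fin 2) ℝ) (hsymm : P.IsSymm)
    (hoff : P 0 1 ≤ 0)
    (r₁ r₂ : ℝ) (hr₁ : 0 < r₁) (hr₁₂ : r₁ ≤ r₂)
    (hrow : ∀ i, r₁ ≤ ∑ j, P i j ∧ ∑ j, P i j ≤ r₂)
    (α β : Fin 2 → ℝ) (hsol : P.mulVec α = β) :
    r₁ * (r₁ + |P 0 1|) ≤ P.det ∧ 0 < r₁ * (r₁ + |P 0 1|) ∧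
    |α 0 - α 1| ≤ 2 * r₂ * max |β 0| |β 1| / (r₁ * (r₁ + |P 0 1|)) :=
  two_by_two_estimate_general P hsymm hoff r₁ r₂ hr₁ hrow α β hsol
end

section
/- Let v₁, v₂ ∈ ℝ^m, and let P be an m×m real symmetric matrix with nonpositive off-diagonal entries and row sums in [r₁, r₂], 0 < r₁ ≤ r₂. Then for m ≥ 2, the determinant of P satisfies det P ≥ r₁(|p_{12}| + r₁) · det P'', where P'' is the (m−2)×(m−2) submatrix of P obtained by deleting the first two rows and columns, and det P'' > 0. -/
open Finset Matrix

/-!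
Pivoting a Z-matrix `A` with positive row sums on its last diagonal entry `d > 0` gives
`det A = d * det S` for the Schur complement `S`, which is again a Z-matrix, with row sums
`s_i - A i ℓ * s_ℓ / d ≥ s_i`. By induction, `det A > 0`, and since pivoting on the last entry
commutes with deleting the first row and column, `s_0 * det A' ≤ det A` for the principal
submatrix `A'` obtained that way. Applying this to `P` and then to `P'`, whose first row sum is
`p̄₂ + |p₁₂| ≥ r₁ + |p₁₂|` by symmetry, gives the bound.
-/

namespace Matrix

variable {K : Type*} [Field K] {k : ℕ}

def schurLast (A : Matrix (Fin (k + 1)) (Fin (k + 1)) K) : Matrix (Fin k) (Fin k) K :=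
  of fun i j => A i.castSucc j.castSucc -
    A i.castSucc (Fin.last k) * A (Fin.last k) j.castSucc / A (Fin.last k) (Fin.last k)

@[simp]
theorem schurLast_apply (A : Matrix (Fin (k + 1)) (Fin (k + 1)) K) (i j : Fin k) :
    schurLast A i j = A i.castSucc j.castSucc -
      A i.castSucc (Fin.last k) * A (Fin.last k) j.castSucc / A (Fin.last k) (Fin.last k) :=
  rfl

theorem det_eq_mul_det_schurLast (A : Matrix (Fin (k + 1)) (Fin (k + 1)) K)
    (hd : A (Fin.last k) (Fin.last k) ≠ 0) :
    A.det = A (Fin.last k) (Fin.last k) * (schurLast A).det := by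
  set d := A (Fin.last k) (Fin.last k)
  let B : Matrix (Fin k) (Fin 1) K := of fun i _ => A i.castSucc (Fin.last k)
  let C : Matrix (Fin 1) (Fin k) K := of fun _ j => A (Fin.last k) j.castSucc
  let D : Matrix (Fin 1) (Fin 1) K := of fun _ _ => d
  let _ : Invertible D :=
    ⟨of fun _ _ => d⁻¹, by ext i j; fin_cases i; fin_cases j; simp [D, mul_apply, hd],
      by ext i j; fin_cases i; fin_cases j; simp [D, mul_apply, hd]⟩
  have hblocks : A.submatrix finSumFinEquiv finSumFinEquiv =
      fromBlocks (A.submatrix Fin.castSucc Fin.castSucc) B C D := by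
    ext (i | i) (j | j) <;> simp [B, C, D, d, Fin.fin_one_eq_zero] <;> rfl
  have hschur : A.submatrix Fin.castSucc Fin.castSucc - B * ⅟D * C = schurLast A := by
    ext i j
    simp [B, C, D, d, mul_apply, div_eq_mul_inv, mul_right_comm]
  rw [← det_submatrix_equiv_self finSumFinEquiv, hblocks, det_fromBlocks₂₂, hschur, det_fin_one]
  rfl

theorem sum_schurLast_row (A : Matrix (Fin (k + 1)) (Fin (k + 1)) K)
    (hd : A (Fin.last k) (Fin.last k) ≠ 0) (i : Fin k) :
    ∑ j, schurLast A i j = ∑ j, A i.castSucc j -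
      A i.castSucc (Fin.last k) * (∑ j, A (Fin.last k) j) / A (Fin.last k) (Fin.last k) := by
  simp only [schurLast_apply, sum_sub_distrib, ← sum_div, ← mul_sum, Fin.sum_univ_castSucc]
  field_simp
  ring

theorem schurLast_submatrix_succ (A : Matrix (Fin (k + 2)) (Fin (k + 2)) K) :
    schurLast (A.submatrix Fin.succ Fin.succ) = (schurLast A).submatrix Fin.succ Fin.succ :=
  rfl

section ZMatrix

variable {𝕜 ι κ : Type*} [Field 𝕜] [LinearOrder 𝕜] [IsStrictOrderedRing 𝕜] [Fintype ι] [Fintype κ]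

theorem sum_row_le_sum_row_submatrix {A : Matrix ι ι 𝕜} (hA : ∀ i j, i ≠ j → A i j ≤ 0)
    {f : κ → ι} (hf : Function.Injective f) (i : κ) :
    ∑ j, A (f i) j ≤ ∑ j, A (f i) (f j) := by
  classical
  have hout : ∑ j ∈ univ \ univ.map ⟨f, hf⟩, A (f i) j ≤ 0 :=
    sum_nonpos fun _ hj => hA _ _ fun h => (mem_sdiff.1 hj).2 (h ▸ mem_map_of_mem _ (mem_univ i))
  rw [← sum_sdiff (subset_univ (univ.map ⟨f, hf⟩)), sum_map]
  simpa using hout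

structure IsZMatrixPosRowSum (A : Matrix ι ι 𝕜) : Prop where
  off_diag_nonpos : ∀ i j, i ≠ j → A i j ≤ 0
  sum_row_pos : ∀ i, 0 < ∑ j, A i j

namespace IsZMatrixPosRowSum

theorem submatrix {A : Matrix ι ι 𝕜} (hA : A.IsZMatrixPosRowSum) {f : κ → ι}
    (hf : Function.Injective f) : (A.submatrix f f).IsZMatrixPosRowSum where
  off_diag_nonpos _ _ hij := hA.off_diag_nonpos _ _ (hf.ne hij)
  sum_row_pos i := (hA.sum_row_pos (f i)).trans_le
    (sum_row_le_sum_row_submatrix hA.off_diag_nonpos hf i)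

theorem diag_pos {A : Matrix ι ι 𝕜} (hA : A.IsZMatrixPosRowSum) (i : ι) : 0 < A i i := by
  simpa using (hA.submatrix (Function.injective_of_subsingleton fun _ : Unit => i)).sum_row_pos ()

variable {k : ℕ} {A : Matrix (Fin (k + 1)) (Fin (k + 1)) 𝕜}

theorem sum_row_le_sum_row_schurLast (hA : A.IsZMatrixPosRowSum) (i : Fin k) :
    ∑ j, A i.castSucc j ≤ ∑ j, schurLast A i j := by
  have hd := hA.diag_pos (Fin.last k)
  have hcol : A i.castSucc (Fin.last k) ≤ 0 :=
    hA.off_diag_nonpos _ _ (Fin.castSucc_lt_last i).ne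
  rw [sum_schurLast_row A hd.ne']
  have := div_nonpos_of_nonpos_of_nonneg
    (mul_nonpos_of_nonpos_of_nonneg hcol (hA.sum_row_pos (Fin.last k)).le) hd.le
  linarith

theorem schurLast (hA : A.IsZMatrixPosRowSum) : (schurLast A).IsZMatrixPosRowSum where
  off_diag_nonpos i j hij := by
    have hcol := hA.off_diag_nonpos i.castSucc _ (Fin.castSucc_lt_last i).ne
    have hrow := hA.off_diag_nonpos _ j.castSucc (Fin.castSucc_lt_last j).ne'
    have := div_nonneg (mul_nonneg_of_nonpos_of_nonpos hcol hrow) (hA.diag_pos (Fin.last k)).le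
    have := hA.off_diag_nonpos _ _ (Fin.castSucc_injective k |>.ne hij)
    rw [schurLast_apply]
    linarith
  sum_row_pos i := (hA.sum_row_pos _).trans_le (hA.sum_row_le_sum_row_schurLast i)

end IsZMatrixPosRowSum

theorem IsZMatrixPosRowSum.det_pos : ∀ {n : ℕ} {A : Matrix (Fin n) (Fin n) 𝕜},
    A.IsZMatrixPosRowSum → 0 < A.det
  | 0, A, _ => by simp
  | _ + 1, A, hA => by
    rw [det_eq_mul_det_schurLast A (hA.diag_pos _).ne']
    exact mul_pos (hA.diag_pos _) hA.schurLast.det_pos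

theorem IsZMatrixPosRowSum.sum_row_zero_mul_det_submatrix_succ_le_det :
    ∀ {n : ℕ} {A : Matrix (Fin (n + 1)) (Fin (n + 1)) 𝕜}, A.IsZMatrixPosRowSum →
      (∑ j, A 0 j) * (A.submatrix Fin.succ Fin.succ).det ≤ A.det
  | 0, A, _ => by simp
  | n + 1, A, hA => by
    have hd := hA.diag_pos (Fin.last (n + 1))
    have hS := hA.schurLast
    rw [det_eq_mul_det_schurLast A hd.ne',
      det_eq_mul_det_schurLast (A.submatrix Fin.succ Fin.succ) hd.ne', schurLast_submatrix_succ]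
    set S := Matrix.schurLast A
    calc (∑ j, A 0 j) * (A (Fin.last (n + 1)) (Fin.last (n + 1)) *
            (S.submatrix Fin.succ Fin.succ).det)
        ≤ A (Fin.last (n + 1)) (Fin.last (n + 1)) *
            ((∑ j, S 0 j) * (S.submatrix Fin.succ Fin.succ).det) := by
          rw [mul_left_comm]
          gcongr
          · exact (hS.submatrix (Fin.succ_injective _)).det_pos.le
          · exact hA.sum_row_le_sum_row_schurLast 0
      _ ≤ A (Fin.last (n + 1)) (Fin.last (n + 1)) * S.det := by
          gcongr
          exact hS.sum_row_zero_mul_det_submatrix_succ_le_det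

end ZMatrix

end Matrix

/-- For a real symmetric `m × m` matrix (`m ≥ 2`) with nonpositive
off-diagonal entries and row sums in `[r₁, r₂]`, `0 < r₁ ≤ r₂`, we have
`det P ≥ r₁ (|p₀₁| + r₁) det P''` where `P''` is the principal submatrix on
the last `m − 2` rows and columns, and `det P'' > 0`. -/
theorem det_lower_bound (m : ℕ) (hm : 2 ≤ m)
    (P : Matrix (Fin m) (Fin m) ℝ) (hsymm : P.IsSymm)
    (hoff : ∀ i j, i ≠ j → P i j ≤ 0)
    (r₁ r₂ : ℝ) (hr₁ : 0 < r₁)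
    (hrow : ∀ i, r₁ ≤ ∑ j, P i j ∧ ∑ j, P i j ≤ r₂) :
    r₁ * (|P ⟨0, by omega⟩ ⟨1, by omega⟩| + r₁) *
        (P.submatrix (fun i : Fin (m - 2) => (⟨i.1 + 2, by omega⟩ : Fin m))
          (fun i : Fin (m - 2) => (⟨i.1 + 2, by omega⟩ : Fin m))).det
      ≤ P.det ∧
    0 < (P.submatrix (fun i : Fin (m - 2) => (⟨i.1 + 2, by omega⟩ : Fin m))
          (fun i : Fin (m - 2) => (⟨i.1 + 2, by omega⟩ : Fin m))).det := by
  obtain ⟨n, rfl⟩ : ∃ n, m = n + 2 := ⟨m - 2, by omega⟩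
  set P' := P.submatrix Fin.succ Fin.succ
  have hP : P.IsZMatrixPosRowSum := ⟨hoff, fun i => hr₁.trans_le (hrow i).1⟩
  have hP' : P'.IsZMatrixPosRowSum := hP.submatrix (Fin.succ_injective _)
  have hP'' : 0 < (P'.submatrix Fin.succ Fin.succ).det :=
    (hP'.submatrix (Fin.succ_injective _)).det_pos
  have hsum' : ∑ j, P' 0 j = |P 0 1| + ∑ j, P 1 j := by
    rw [abs_of_nonpos (hoff 0 1 zero_ne_one), ← hsymm.apply 0 1, Fin.sum_univ_succ (P 1)]
    simp [P']
  have key : r₁ * (|P 0 1| + r₁) * (P'.submatrix Fin.succ Fin.succ).det ≤ P.det :=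
    calc r₁ * (|P 0 1| + r₁) * (P'.submatrix Fin.succ Fin.succ).det
        ≤ (∑ j, P 0 j) * ((∑ j, P' 0 j) * (P'.submatrix Fin.succ Fin.succ).det) := by
          rw [mul_assoc, hsum']
          gcongr
          · exact hr₁.le.trans (hrow 0).1
          · exact (hrow 0).1
          · exact (hrow 1).1
      _ ≤ (∑ j, P 0 j) * P'.det := by
          gcongr
          · exact hr₁.le.trans (hrow 0).1
          · exact hP'.sum_row_zero_mul_det_submatrix_succ_le_det
      _ ≤ P.det := hP.sum_row_zero_mul_det_submatrix_succ_le_det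
  exact ⟨key, hP''⟩
end
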